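/- Let m > 0, p > 1 with γ := m(p-1)-1 > 0, and f ∈ C¹([0,1]) with f(0)=f(1)=0 and ∫₀¹ u^{m-1} f(u) du > 0. Set h := (mp/(p-1)) ∫₀¹ u^{m-1} f(u) du > 0 and define T₀(X) = X^{-1/(p-1)} [h - (mp/(p-1)) ∫₀^X u^{m-1} f(u) du]^{1/p} for 0 < X ≤ 1. Then T₀ solves the c = 0 trajectory equation dZ/dX = -(Z^p + m X^{γ/(p-1)-1} f(X)) / ((p-1) X Z^{p-1}) on its domain of positivity, satisfies T₀(1) = 0, and T₀(X) → +∞ as X → 0⁺. -/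

import Mathlib

open Real Set Filter intervalIntegral MeasureTheory Topology

/-! Writing `G(X) = h - (mp/(p-1)) ∫₀^X u^{m-1} f(u) du`, the ansatz `Z = X^{-1/(p-1)} G^{1/p}`
turns the trajectory equation into `G' = -(mp/(p-1)) X^{m-1} f(X)`, which is the fundamental
theorem of calculus. The choice of `h` gives `G(1) = 0`; since `u^{m-1}` is integrable at `0` when
`m > 0`, `G(X) → h > 0` as `X → 0⁺`, and the factor `X^{-1/(p-1)}` makes `T₀` blow up. -/

lemma intervalIntegrable_rpow_mul {r a b : ℝ} (hr : -1 < r) {f : ℝ → ℝ}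
    (hf : ContinuousOn f (uIcc a b)) : IntervalIntegrable (fun u ↦ u ^ r * f u) volume a b :=
  (intervalIntegrable_rpow' hr).mul_continuousOn hf

lemma hasDerivAt_integral_rpow_mul {r b X : ℝ} (hr : -1 < r) {f : ℝ → ℝ}
    (hf : ContinuousOn f (Icc 0 b)) (hX : X ∈ Ioo 0 b) :
    HasDerivAt (fun Y ↦ ∫ u in (0:ℝ)..Y, u ^ r * f u) (X ^ r * f X) X := by
  have hcont : ContinuousOn (fun u ↦ u ^ r * f u) (Ioo 0 b) := fun u hu ↦
    ((continuousAt_rpow_const u r (Or.inl hu.1.ne')).mul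
      (hf.continuousAt (Icc_mem_nhds hu.1 hu.2))).continuousWithinAt
  refine integral_hasDerivAt_right
    (intervalIntegrable_rpow_mul hr (hf.mono ?_))
    (hcont.stronglyMeasurableAtFilter isOpen_Ioo X hX)
    (hcont.continuousAt (Ioo_mem_nhds hX.1 hX.2))
  rw [uIcc_of_le hX.1.le]
  exact Icc_subset_Icc_right hX.2.le

lemma tendsto_integral_nhdsGT_zero {g : ℝ → ℝ} {b : ℝ} (hb : 0 < b)
    (hg : IntervalIntegrable g volume 0 b) :
    Tendsto (fun X ↦ ∫ u in (0:ℝ)..X, g u) (𝓝[>] 0) (𝓝 0) := by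
  have hcont := continuousOn_primitive_interval' hg left_mem_uIcc 0 left_mem_uIcc
  rw [uIcc_of_le hb.le] at hcont
  simpa using (hcont.mono_of_mem_nhdsWithin
    (mem_of_superset (Ioo_mem_nhdsGT hb) Ioo_subset_Icc_self)).tendsto

lemma tendsto_rpow_neg_mul_rpow_nhdsGT_zero {a b c : ℝ} (ha : 0 < a) (hc : 0 < c)
    {G : ℝ → ℝ} (hG : Tendsto G (𝓝[>] 0) (𝓝 c)) :
    Tendsto (fun X ↦ X ^ (-a) * G X ^ b) (𝓝[>] 0) atTop :=
  (tendsto_rpow_neg_nhdsGT_zero (neg_lt_zero.2 ha)).atTop_mul_pos (rpow_pos_of_pos hc b)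
    (((continuousAt_rpow_const c b (Or.inl hc.ne')).tendsto.comp hG :
      Tendsto (fun X ↦ G X ^ b) _ _))

lemma hasDerivAt_trajectory {p X G' : ℝ} {G : ℝ → ℝ} (hp : 1 < p) (hX : 0 < X)
    (hGX : 0 < G X) (hG : HasDerivAt G G' X) :
    HasDerivAt (fun Y ↦ Y ^ (-(1 / (p - 1))) * G Y ^ (1 / p))
      (-((X ^ (-(1 / (p - 1))) * G X ^ (1 / p)) ^ p - (p - 1) / p * X ^ (-(1 / (p - 1))) * G')
        / ((p - 1) * X * (X ^ (-(1 / (p - 1))) * G X ^ (1 / p)) ^ (p - 1))) X := by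
  have hp1 : p - 1 ≠ 0 := by linarith
  have hp0 : p ≠ 0 := by linarith
  set A := X ^ (-(1 / (p - 1))) with hA
  set B := G X ^ (1 / p) with hB
  have hApos : 0 < A := rpow_pos_of_pos hX _
  have hBpos : 0 < B := rpow_pos_of_pos hGX _
  have hpow_sub_one : (A * B) ^ (p - 1) = X⁻¹ * G X / B := by
    rw [mul_rpow hApos.le hBpos.le, hA, hB, ← rpow_mul hX.le, ← rpow_mul hGX.le,
      show -(1 / (p - 1)) * (p - 1) = -1 by field_simp,
      show 1 / p * (p - 1) = 1 - 1 / p by field_simp, rpow_neg_one, rpow_sub hGX, rpow_one]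
    ring
  have hpow : (A * B) ^ p = X⁻¹ * G X * A := by
    rw [← sub_add_cancel p 1, rpow_add_one (mul_pos hApos hBpos).ne', hpow_sub_one]
    field_simp
  refine ((hasDerivAt_rpow_const (p := -(1 / (p - 1))) (Or.inl hX.ne')).mul
    ((hasDerivAt_rpow_const (p := 1 / p) (Or.inl hGX.ne')).comp X hG)).congr_deriv ?_
  rw [Function.comp_apply, rpow_sub_one hX.ne', rpow_sub_one hGX.ne', ← hA, ← hB, hpow,
    hpow_sub_one]
  field_simp
  ring

lemma rpow_neg_inv_sub_one_mul_rpow_sub_one {m p X : ℝ} (hp : p ≠ 1) (hX : 0 < X) :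
    X ^ (-(1 / (p - 1))) * X ^ (m - 1) = X ^ ((m * (p - 1) - 1) / (p - 1) - 1) := by
  have hp1 : p - 1 ≠ 0 := sub_ne_zero.2 hp
  rw [← rpow_add hX]
  congr 1
  field_simp
  ring

theorem stmt_5_general (m p γ h : ℝ) (hm : 0 < m) (hp : 1 < p)
    (hγ : γ = m * (p - 1) - 1)
    (f : ℝ → ℝ) (hf : ContDiffOn ℝ 1 f (Icc 0 1))
    (hint : 0 < ∫ u in (0:ℝ)..1, u ^ (m - 1) * f u)
    (hh : h = (m * p / (p - 1)) * ∫ u in (0:ℝ)..1, u ^ (m - 1) * f u)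
    (T₀ : ℝ → ℝ)
    (hT₀ : ∀ X, T₀ X = X ^ (-(1 / (p - 1))) *
      (h - (m * p / (p - 1)) * ∫ u in (0:ℝ)..X, u ^ (m - 1) * f u) ^ (1 / p)) :
    (∀ X ∈ Ioo (0:ℝ) 1,
      0 < h - (m * p / (p - 1)) * (∫ u in (0:ℝ)..X, u ^ (m - 1) * f u) →
      HasDerivAt T₀
        (-(T₀ X ^ p + m * X ^ (γ / (p - 1) - 1) * f X) / ((p - 1) * X * T₀ X ^ (p - 1)))
        X) ∧
    T₀ 1 = 0 ∧
    Tendsto T₀ (nhdsWithin 0 (Ioi 0)) atTop := by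
  set G : ℝ → ℝ := fun X ↦ h - m * p / (p - 1) * ∫ u in (0:ℝ)..X, u ^ (m - 1) * f u
  obtain rfl : T₀ = fun X ↦ X ^ (-(1 / (p - 1))) * G X ^ (1 / p) := funext hT₀
  have hr : -1 < m - 1 := by linarith
  refine ⟨fun X hX hGX ↦ ?_, ?_, ?_⟩
  · refine (hasDerivAt_trajectory hp hX.1 hGX (((hasDerivAt_integral_rpow_mul hr
      hf.continuousOn hX).const_mul _).const_sub h)).congr_deriv ?_
    have hsource : (p - 1) / p * X ^ (-(1 / (p - 1))) * -(m * p / (p - 1) * (X ^ (m - 1) * f X))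
        = -(m * X ^ (γ / (p - 1) - 1) * f X) := by
      have hp1 : p - 1 ≠ 0 := by linarith
      rw [hγ, ← rpow_neg_inv_sub_one_mul_rpow_sub_one hp.ne' hX.1]
      field_simp
    rw [hsource, sub_neg_eq_add]
  · simp only [G, hh, sub_self, zero_rpow (one_div_pos.2 (zero_lt_one.trans hp)).ne', mul_zero]
  · refine tendsto_rpow_neg_mul_rpow_nhdsGT_zero (one_div_pos.2 (sub_pos.2 hp))
      (c := h) (by rw [hh]; positivity) ?_
    have hint_le_one : IntervalIntegrable (fun u ↦ u ^ (m - 1) * f u) volume 0 1 :=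
      intervalIntegrable_rpow_mul hr (hf.continuousOn.mono (uIcc_of_le zero_le_one).subset)
    simpa using ((tendsto_integral_nhdsGT_zero one_pos hint_le_one).const_mul
      (m * p / (p - 1))).const_sub h

/-- The trajectory entering the saddle point `S(1,0)` at zero speed: with
`h = (mp/(p-1)) ∫₀¹ u^{m-1} f(u) du > 0`, the function
`T₀(X) = X^{-1/(p-1)} [h - (mp/(p-1)) ∫₀^X u^{m-1} f(u) du]^{1/p}` solves the `c = 0`
trajectory equation on its domain of positivity, satisfies `T₀(1) = 0`, and blows up
as `X → 0⁺`. -/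
theorem stmt_5 (m p γ h : ℝ) (hm : 0 < m) (hp : 1 < p)
    (hγ : γ = m * (p - 1) - 1) (hγpos : 0 < γ)
    (f : ℝ → ℝ) (hf : ContDiffOn ℝ 1 f (Icc 0 1)) (hf0 : f 0 = 0) (hf1 : f 1 = 0)
    (hint : 0 < ∫ u in (0:ℝ)..1, u ^ (m - 1) * f u)
    (hh : h = (m * p / (p - 1)) * ∫ u in (0:ℝ)..1, u ^ (m - 1) * f u)
    (T₀ : ℝ → ℝ)
    (hT₀ : ∀ X, T₀ X = X ^ (-(1 / (p - 1))) *
      (h - (m * p / (p - 1)) * ∫ u in (0:ℝ)..X, u ^ (m - 1) * f u) ^ (1 / p)) :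
    (∀ X ∈ Ioo (0:ℝ) 1,
      0 < h - (m * p / (p - 1)) * (∫ u in (0:ℝ)..X, u ^ (m - 1) * f u) →
      HasDerivAt T₀
        (-(T₀ X ^ p + m * X ^ (γ / (p - 1) - 1) * f X) / ((p - 1) * X * T₀ X ^ (p - 1)))
        X) ∧
    T₀ 1 = 0 ∧
    Tendsto T₀ (nhdsWithin 0 (Ioi 0)) atTop :=
  stmt_5_general m p γ h hm hp hγ f hf hint hh T₀ hT₀
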